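/- Let a CBN fail Properties O1 and/or O2, with L1 the set of non-directly-observable nodes that are not the unique in-neighbor of any other node, and L_C the set of cycles of non-directly-observable nodes (each of whose nodes has in-degree one and is a unique in-neighbor of some other node) for which no node of the cycle is the unique in-neighbor of a node outside the cycle. Then making directly observable all nodes of L1 plus one representative node from each cycle in L_C yields an observable CBN. -/
import Mathlib


/-- One synchronous step of a conjunctive Boolean network with dependency relation `adj`
(`adj j i` means there is an edge `j → i`). -/
def cbnStep {n : ℕ} (adj : Fin n → Fin n → Prop) [DecidableRel adj]
    (x : Fin n → Bool) : Fin n → Bool :=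
  fun i => decide (∀ j, adj j i → x j = true)

/-- Observability with the set `O` of directly observable nodes as outputs. -/
def ObservableS (n : ℕ) (adj : Fin n → Fin n → Prop) [DecidableRel adj]
    (O : Finset (Fin n)) : Prop :=
  ∃ N : ℕ, ∀ x y : Fin n → Bool,
    (∀ k ≤ N, ∀ j ∈ O, (cbnStep adj)^[k] x j = (cbnStep adj)^[k] y j) → x = y

/-- `UIN adj i j` : `X_j` is a node, other than `X_i`, whose in-neighbor set is exactly `{X_i}`. -/
def UIN {n : ℕ} (adj : Fin n → Fin n → Prop) (i j : Fin n) : Prop :=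
  j ≠ i ∧ ∀ p : Fin n, adj p j ↔ p = i

/-- A "bad" cycle (a cycle of `L_C`): a cycle of non-directly-observable nodes, each of
in-degree one and each the unique in-neighbor of some other node, such that no node of the
cycle is the unique in-neighbor of a node outside the cycle (it violates Property O2). -/
def BadCycle {n : ℕ} (adj : Fin n → Fin n → Prop) (O : Finset (Fin n))
    (L : ℕ) (c : Fin L → Fin n) : Prop :=
  ∃ hL : 0 < L, Function.Injective c ∧
    (∀ t : Fin L, adj (c t) (c ⟨(t.val + 1) % L, Nat.mod_lt _ hL⟩)) ∧
    (∀ t : Fin L, c t ∉ O) ∧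
    (∀ t : Fin L, ∃! p : Fin n, adj p (c t)) ∧
    (∀ t : Fin L, ∃ j : Fin n, UIN adj (c t) j) ∧
    ¬ ∃ (t : Fin L) (j : Fin n), (∀ s : Fin L, c s ≠ j) ∧ UIN adj (c t) j

/-- If `j` has exactly `{i}` as in-neighbor set, then after one step the state of `j`
is the previous state of `i`. -/
lemma uin_cbnStep {n : ℕ} {adj : Fin n → Fin n → Prop} [DecidableRel adj]
    {i j : Fin n} (h : UIN adj i j) (x : Fin n → Bool) :
    cbnStep adj x j = x i := by
  have hiff : (∀ p, adj p j → x p = true) ↔ (x i = true) := by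
    constructor
    · intro hp; exact hp i ((h.2 i).mpr rfl)
    · intro hx p hp
      have := (h.2 p).mp hp
      rwa [this]
  have h2 : decide (∀ p, adj p j → x p = true) = decide (x i = true) :=
    decide_eq_decide.mpr hiff
  simp only [cbnStep]
  rw [h2]
  simp

/-- The unique-in-neighbor relation is backwards functional. -/
lemma uin_pred_unique {n : ℕ} {adj : Fin n → Fin n → Prop}
    {i i' j : Fin n} (h : UIN adj i j) (h' : UIN adj i' j) : i = i' :=
  (h'.2 i).mp ((h.2 i).mpr rfl)

open scoped Classical in
/-- Making directly observable every node of `L1` (the non-directly-observable nodes that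
are not the unique in-neighbor of any other node) together with one representative node
from each bad cycle yields an observable CBN. -/
theorem add_L1_and_cycle_reps_observable (n : ℕ) (adj : Fin n → Fin n → Prop)
    [DecidableRel adj] (O R : Finset (Fin n))
    (hrep : ∀ (L : ℕ) (c : Fin L → Fin n), BadCycle adj O L c → ∃ t : Fin L, c t ∈ R) :
    ObservableS n adj
      (O ∪ Finset.univ.filter (fun i : Fin n => i ∉ O ∧ ¬ ∃ j : Fin n, UIN adj i j) ∪ R) := by
  set O' : Finset (Fin n) :=
    O ∪ Finset.univ.filter (fun i : Fin n => i ∉ O ∧ ¬ ∃ j : Fin n, UIN adj i j) ∪ R with hO'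
  -- `Obs i k` : the initial state of node `i` can be read off from the output of some
  -- directly observable node `k` steps later.
  set Obs : Fin n → ℕ → Prop :=
    fun i k => ∃ j ∈ O', ∀ x : Fin n → Bool, x i = (cbnStep adj)^[k] x j with hObs
  have hmemO' : ∀ i : Fin n, i ∈ O' ↔ (i ∈ O ∨ (i ∉ O ∧ ¬ ∃ j : Fin n, UIN adj i j) ∨ i ∈ R) := by
    intro i
    simp [hO', Finset.mem_union, Finset.mem_filter, or_assoc]
  -- Key claim: every node is observed after some delay.
  have key : ∀ i : Fin n, ∃ k, Obs i k := by
    by_contra hk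
    push_neg at hk
    obtain ⟨i₀, hi₀⟩ := hk
    -- the set of unobservable nodes
    set S : Set (Fin n) := {i | ∀ k, ¬ Obs i k} with hS
    have hi₀S : i₀ ∈ S := hi₀
    have hSO : ∀ i ∈ S, i ∉ O' := by
      intro i hiS hiO'
      exact hiS 0 ⟨i, hiO', fun x => rfl⟩
    have hsucc : ∀ i ∈ S, ∃ j, UIN adj i j := by
      intro i hiS
      have hiO' := hSO i hiS
      rw [hmemO'] at hiO'
      push_neg at hiO'
      obtain ⟨h1, h2, _⟩ := hiO'
      exact h2 h1
    have hclosed : ∀ i ∈ S, ∀ j, UIN adj i j → j ∈ S := by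
      intro i hiS j hij
      intro k hobs
      obtain ⟨o, hoO', ho⟩ := hobs
      refine hiS (k + 1) ⟨o, hoO', fun x => ?_⟩
      have h1 : x i = (cbnStep adj x) j := (uin_cbnStep hij x).symm
      rw [h1, ho (cbnStep adj x), ← Function.iterate_succ_apply]
    -- the successor map on `S`
    have hgdef : ∀ z : {i : Fin n // i ∈ S}, ∃ w : {i : Fin n // i ∈ S}, UIN adj z.1 w.1 := by
      intro z
      obtain ⟨j, hj⟩ := hsucc z.1 z.2
      exact ⟨⟨j, hclosed z.1 z.2 j hj⟩, hj⟩
    set T := {i : Fin n // i ∈ S} with hT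
    let g : T → T := fun z => Classical.choose (hgdef z)
    have hg : ∀ z : T, UIN adj z.1 (g z).1 := fun z => Classical.choose_spec (hgdef z)
    have ginj : Function.Injective g := by
      intro z z' hzz'
      have h1 := hg z
      have h2 := hg z'
      rw [hzz'] at h1
      exact Subtype.ext (uin_pred_unique h1 h2)
    have gbij : Function.Bijective g := Finite.injective_iff_bijective.mp ginj
    -- the orbit of `z₀` under `g` is eventually periodic, hence (by injectivity) periodic
    set z₀ : T := ⟨i₀, hi₀S⟩ with hz₀
    have hper : ∃ L, 0 < L ∧ g^[L] z₀ = z₀ := by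
      obtain ⟨a, b, hne, hab⟩ :=
        Finite.exists_ne_map_eq_of_infinite (fun k : ℕ => g^[k] z₀)
      rcases hne.lt_or_gt with hlt | hlt
      · refine ⟨b - a, Nat.sub_pos_of_lt hlt, ?_⟩
        have h1 : g^[a] (g^[b - a] z₀) = g^[a] z₀ := by
          rw [← Function.iterate_add_apply, Nat.add_sub_cancel' hlt.le]
          exact hab.symm
        exact (ginj.iterate a) h1
      · refine ⟨a - b, Nat.sub_pos_of_lt hlt, ?_⟩
        have h1 : g^[b] (g^[a - b] z₀) = g^[b] z₀ := by
          rw [← Function.iterate_add_apply, Nat.add_sub_cancel' hlt.le]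
          exact hab
        exact (ginj.iterate b) h1
    set L := Nat.find hper with hLdef
    obtain ⟨hLpos, hLfix⟩ : 0 < L ∧ g^[L] z₀ = z₀ := Nat.find_spec hper
    -- construct the cycle
    set c : Fin L → Fin n := fun t => (g^[t.val] z₀).1 with hc
    have cinj : Function.Injective c := by
      have aux : ∀ t s : Fin L, t.val ≤ s.val → c t = c s → t = s := by
        intro t s hts hcts
        have h1 : g^[t.val] z₀ = g^[s.val] z₀ := Subtype.ext hcts
        have h2 : g^[t.val] (g^[s.val - t.val] z₀) = g^[t.val] z₀ := by
          rw [← Function.iterate_add_apply, Nat.add_sub_cancel' hts]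
          exact h1.symm
        have h3 : g^[s.val - t.val] z₀ = z₀ := (ginj.iterate t.val) h2
        by_contra hne
        have hlt : 0 < s.val - t.val := by
          have : t.val ≠ s.val := fun h => hne (Fin.ext h)
          omega
        have hsmall : s.val - t.val < L := by
          have := s.isLt; omega
        exact (Nat.find_min hper hsmall) ⟨hlt, h3⟩
      intro t s h
      rcases le_total t.val s.val with hle | hle
      · exact aux t s hle h
      · exact (aux s t hle h.symm).symm
    have hcS : ∀ t : Fin L, c t ∈ S := fun t => (g^[t.val] z₀).2
    -- the successor of `c t` in the cycle
    have hnext : ∀ t : Fin L,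
        c ⟨(t.val + 1) % L, Nat.mod_lt _ hLpos⟩ = (g (g^[t.val] z₀)).1 := by
      intro t
      rcases lt_or_ge (t.val + 1) L with hlt | hge
      · have hmod : (t.val + 1) % L = t.val + 1 := Nat.mod_eq_of_lt hlt
        simp only [hc, hmod]
        rw [Function.iterate_succ_apply']
      · have heq : t.val + 1 = L := by have := t.isLt; omega
        have hmod : (t.val + 1) % L = 0 := by rw [heq]; exact Nat.mod_self L
        simp only [hc, hmod]
        have : g (g^[t.val] z₀) = g^[L] z₀ := by
          have h1 : g (g^[t.val] z₀) = g^[t.val + 1] z₀ :=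
            (Function.iterate_succ_apply' g t.val z₀).symm
          rw [h1, heq]
        rw [this, hLfix]
        rfl
    have hcyc : ∀ t : Fin L, UIN adj (c t) (c ⟨(t.val + 1) % L, Nat.mod_lt _ hLpos⟩) := by
      intro t
      rw [hnext t]
      exact hg (g^[t.val] z₀)
    -- `c` is a bad cycle
    have hbad : BadCycle adj O L c := by
      refine ⟨hLpos, cinj, ?_, ?_, ?_, ?_, ?_⟩
      · exact fun t => ((hcyc t).2 (c t)).mpr rfl
      · intro t hO
        exact hSO (c t) (hcS t) ((hmemO' (c t)).mpr (Or.inl hO))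
      · -- in-degree exactly one: use surjectivity of `g`
        intro t
        obtain ⟨w, hw⟩ := gbij.2 (g^[t.val] z₀)
        have hwuin : UIN adj w.1 (c t) := by
          have := hg w
          rwa [hw] at this
        exact ⟨w.1, (hwuin.2 w.1).mpr rfl, fun p hp => (hwuin.2 p).mp hp⟩
      · exact fun t => ⟨(g (g^[t.val] z₀)).1, by rw [← hnext t]; exact hcyc t⟩
      · rintro ⟨t, j, hnotin, huin⟩
        have hjS : j ∈ S := hclosed (c t) (hcS t) j huin
        obtain ⟨w, hw⟩ := gbij.2 ⟨j, hjS⟩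
        have hwuin : UIN adj w.1 j := by
          have := hg w
          rw [hw] at this
          exact this
        have hwct : w.1 = c t := uin_pred_unique hwuin huin
        have hwz : w = g^[t.val] z₀ := Subtype.ext hwct
        have : j = c ⟨(t.val + 1) % L, Nat.mod_lt _ hLpos⟩ := by
          rw [hnext t, ← hwz, hw]
        exact hnotin ⟨(t.val + 1) % L, Nat.mod_lt _ hLpos⟩ this.symm
    obtain ⟨t, htR⟩ := hrep L c hbad
    exact hSO (c t) (hcS t) ((hmemO' (c t)).mpr (Or.inr (Or.inr htR)))
  -- conclude observability
  choose k hk using key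
  refine ⟨Finset.univ.sup k, fun x y h => ?_⟩
  funext i
  obtain ⟨j, hjO', hobs⟩ := hk i
  rw [hobs x, hobs y]
  exact h (k i) (Finset.le_sup (Finset.mem_univ i)) j hjO'
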